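/- arXiv:2003.07532 — 2 statements merged into one kernel-verified Lean document; each statement's English description precedes it below -/
import Mathlib

section
/- For a square complex matrix A and real (or complex) t with |t| < 1, the matrix binomial series ∑_{k=0}^∞ (A)_k t^k / k! converges to (1-t)^{-A}, where (1-t)^{-A} = exp(-A log(1-t)). -/
/-
The series `F z = ∑ (A)ₖ zᵏ / k!` converges on the unit disc and satisfies `(1 - z) F' = F A`,
because the derivative of `(A)ₖ₊₁ zᵏ⁺¹ / (k+1)!` is `(A)ₖ (A + k) zᵏ / k!`. Meanwhile
`g z = exp (log (1 - z) • A)` satisfies `g' = -(1 - z)⁻¹ • g A`. Since `F z` commutes with `A`,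
`(g F)' = 0`, so `g F ≡ g 0 * F 0 = 1` on the disc, and `F = g⁻¹ = exp (-log (1 - z) • A)`.
-/

open Matrix Complex Finset

/-- Matrix Pochhammer symbol: `(A)_0 = I`, `(A)_{n+1} = (A)_n (A + nI)`. -/
noncomputable def poch {r : ℕ} (A : Matrix (Fin r) (Fin r) ℂ) : ℕ → Matrix (Fin r) (Fin r) ℂ
  | 0 => 1
  | n + 1 => poch A n * (A + (n : ℂ) • 1)

open Filter Polynomial
open scoped Nat

theorem summable_ascPochhammer_eval_mul_pow_div_factorial {a x : ℝ} (ha : 0 < a) (hx₀ : 0 < x)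
    (hx : x < 1) : Summable fun k : ℕ => (ascPochhammer ℝ k).eval a * x ^ k / k ! := by
  refine summable_of_ratio_test_tendsto_lt_one hx
    (Eventually.of_forall fun k => (by have := ascPochhammer_pos k a ha; positivity)) ?_
  have hratio : ∀ k : ℕ, x * ((a + k) / (1 + k)) =
      ‖(ascPochhammer ℝ (k + 1)).eval a * x ^ (k + 1) / ((k + 1)! : ℝ)‖ /
        ‖(ascPochhammer ℝ k).eval a * x ^ k / (k ! : ℝ)‖ := by
    intro k
    have := ascPochhammer_pos k a ha
    have := ascPochhammer_pos (k + 1) a ha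
    rw [Real.norm_of_nonneg (by positivity), Real.norm_of_nonneg (by positivity),
      ascPochhammer_succ_eval, Nat.factorial_succ]
    push_cast
    field_simp
    ring
  have hlim := (tendsto_add_mul_div_add_mul_atTop_nhds a 1 1 one_ne_zero).const_mul x
  simp only [one_mul, div_one, mul_one] at hlim
  exact hlim.congr hratio

noncomputable def binomialTerm {𝔸 : Type*} [Ring 𝔸] [Algebra ℂ 𝔸] (A : 𝔸) (k : ℕ) (z : ℂ) :
    𝔸 :=
  ((k ! : ℂ)⁻¹ * z ^ k) • aeval A (ascPochhammer ℂ k)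

section BanachAlgebra

variable {𝔸 : Type*} [NormedRing 𝔸] [NormedAlgebra ℂ 𝔸]

theorem hasDerivAt_binomialTerm (A : 𝔸) (k : ℕ) (z : ℂ) :
    HasDerivAt (binomialTerm A k)
      (((k ! : ℂ)⁻¹ * (k * z ^ (k - 1))) • aeval A (ascPochhammer ℂ k)) z :=
  ((hasDerivAt_pow k z).const_mul _).smul_const _

theorem deriv_binomialTerm_zero (A : 𝔸) (z : ℂ) : deriv (binomialTerm A 0) z = 0 := by
  simp [(hasDerivAt_binomialTerm A 0 z).deriv]

theorem deriv_binomialTerm_succ (A : 𝔸) (k : ℕ) (z : ℂ) :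
    deriv (binomialTerm A (k + 1)) z =
      binomialTerm A k z * A + z • deriv (binomialTerm A k) z := by
  have hfac :
      ((k + 1)! : ℂ)⁻¹ * ((k + 1 : ℕ) * z ^ (k + 1 - 1)) = (k ! : ℂ)⁻¹ * z ^ k := by
    rw [Nat.factorial_succ, Nat.add_sub_cancel]
    push_cast
    field_simp
  have hpow : (k ! : ℂ)⁻¹ * z ^ k * k = z * ((k ! : ℂ)⁻¹ * (k * z ^ (k - 1))) := by
    rcases k with _ | k
    · simp
    · rw [Nat.add_sub_cancel, pow_succ]
      ring
  have hcast :
      aeval A (ascPochhammer ℂ k) * (k : 𝔸) = (k : ℂ) • aeval A (ascPochhammer ℂ k) := by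
    rw [Nat.cast_smul_eq_nsmul, nsmul_eq_mul']
  rw [(hasDerivAt_binomialTerm A _ z).deriv, (hasDerivAt_binomialTerm A k z).deriv, hfac,
    ascPochhammer_succ_right, map_mul, map_add, aeval_X, map_natCast, mul_add, hcast, smul_add,
    smul_smul, hpow]
  simp only [binomialTerm, smul_mul_assoc, smul_smul]

theorem one_sub_smul_eq_of_hasSum_deriv_binomialTerm (A : 𝔸) {z : ℂ} {F D : 𝔸}
    (hF : HasSum (fun k => binomialTerm A k z) F)
    (hD : HasSum (fun k => deriv (binomialTerm A k) z) D) :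
    (1 - z) • D = F * A := by
  have hshift : HasSum (fun k => deriv (binomialTerm A (k + 1)) z) D := by
    simpa [deriv_binomialTerm_zero] using (hasSum_nat_add_iff' 1).mpr hD
  have hrec : HasSum (fun k => deriv (binomialTerm A (k + 1)) z) (F * A + z • D) := by
    simpa only [deriv_binomialTerm_succ] using (hF.mul_right A).add (hD.const_smul z)
  rw [sub_smul, one_smul, sub_eq_iff_eq_add]
  exact hshift.unique hrec

theorem commute_binomialTerm (A : 𝔸) (k : ℕ) (z : ℂ) : Commute A (binomialTerm A k z) := by
  unfold binomialTerm
  simpa using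
    ((Commute.all X (ascPochhammer ℂ k)).map (aeval A)).smul_right ((k ! : ℂ)⁻¹ * z ^ k)

theorem tsum_binomialTerm_zero (A : 𝔸) : ∑' k, binomialTerm A k 0 = 1 := by
  rw [tsum_eq_single 0 fun k hk => by simp [binomialTerm, zero_pow hk]]
  simp [binomialTerm]

theorem hasDerivAt_exp_log_one_sub_smul [CompleteSpace 𝔸] (A : 𝔸) {z : ℂ}
    (hz : ‖z‖ < 1) :
    HasDerivAt (fun w => NormedSpace.exp (log (1 - w) • A))
      ((-(1 - z)⁻¹) • (NormedSpace.exp (log (1 - z) • A) * A)) z := by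
  have hslit : 1 - z ∈ slitPlane := by
    simpa [sub_eq_add_neg] using mem_slitPlane_of_norm_lt_one (z := -z) (by simpa using hz)
  have hlog : HasDerivAt (fun w => log (1 - w)) (-(1 - z)⁻¹) z := by
    simpa [div_eq_inv_mul] using ((hasDerivAt_id z).const_sub 1).clog hslit
  exact (hasDerivAt_exp_smul_const A (log (1 - z))).scomp z hlog

variable [NormOneClass 𝔸]

-- The shift `‖A‖ + 1` keeps every Pochhammer value positive, as the ratio test needs.
theorem norm_aeval_ascPochhammer_le (A : 𝔸) (k : ℕ) :
    ‖aeval A (ascPochhammer ℂ k)‖ ≤ (ascPochhammer ℝ k).eval (‖A‖ + 1) := by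
  induction k with
  | zero => simp
  | succ k ih =>
    have hk : ‖A + (k : 𝔸)‖ ≤ ‖A‖ + 1 + k := by
      have := Nat.norm_cast_le (α := 𝔸) k
      rw [norm_one, mul_one] at this
      linarith [norm_add_le A (k : 𝔸)]
    rw [ascPochhammer_succ_right, ascPochhammer_succ_eval, map_mul, map_add, aeval_X,
      map_natCast]
    exact (norm_mul_le _ _).trans (mul_le_mul ih hk (norm_nonneg _)
      (ascPochhammer_pos k _ (by positivity)).le)

theorem norm_binomialTerm_le (A : 𝔸) (k : ℕ) {z : ℂ} {ρ : ℝ} (hz : ‖z‖ ≤ ρ) :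
    ‖binomialTerm A k z‖ ≤ (ascPochhammer ℝ k).eval (‖A‖ + 1) * ρ ^ k / k ! := by
  rw [binomialTerm, norm_smul, norm_mul, norm_inv, norm_pow, Complex.norm_natCast,
    div_eq_inv_mul, mul_comm _ (ρ ^ k), ← mul_assoc]
  have hρ : 0 ≤ ρ := (norm_nonneg z).trans hz
  gcongr
  exact norm_aeval_ascPochhammer_le A k

variable [CompleteSpace 𝔸]

theorem summable_binomialTerm (A : 𝔸) {z : ℂ} (hz : ‖z‖ < 1) :
    Summable fun k => binomialTerm A k z := by
  obtain ⟨ρ, hzρ, hρ⟩ := exists_between hz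
  exact .of_norm_bounded (summable_ascPochhammer_eval_mul_pow_div_factorial (by positivity)
    ((norm_nonneg z).trans_lt hzρ) hρ) fun k => norm_binomialTerm_le A k hzρ.le

theorem hasDerivAt_tsum_binomialTerm (A : 𝔸) {z : ℂ} (hz : ‖z‖ < 1) :
    HasDerivAt (fun w => ∑' k, binomialTerm A k w)
      ((1 - z)⁻¹ • ((∑' k, binomialTerm A k z) * A)) z := by
  obtain ⟨ρ, hzρ, hρ⟩ := exists_between hz
  have hu := summable_ascPochhammer_eval_mul_pow_div_factorial (a := ‖A‖ + 1) (by positivity)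
    ((norm_nonneg z).trans_lt hzρ) hρ
  have hdiff : ∀ k, DifferentiableOn ℂ (binomialTerm A k) (Metric.ball 0 ρ) := fun k w _ =>
    (hasDerivAt_binomialTerm A k w).differentiableAt.differentiableWithinAt
  have hbound : ∀ k, ∀ w ∈ Metric.ball (0 : ℂ) ρ,
      ‖binomialTerm A k w‖ ≤ (ascPochhammer ℝ k).eval (‖A‖ + 1) * ρ ^ k / k ! :=
    fun k w hw => norm_binomialTerm_le A k (mem_ball_zero_iff.mp hw).le
  have hzρ' : z ∈ Metric.ball (0 : ℂ) ρ := mem_ball_zero_iff.mpr hzρ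
  have hD := Complex.hasSum_deriv_of_summable_norm hu hdiff Metric.isOpen_ball hbound hzρ'
  have hF := (Complex.differentiableOn_tsum_of_summable_norm hu hdiff Metric.isOpen_ball
    hbound).differentiableAt (Metric.isOpen_ball.mem_nhds hzρ')
  have h1z : 1 - z ≠ 0 := sub_ne_zero.mpr fun h => by simp [← h] at hz
  rw [← one_sub_smul_eq_of_hasSum_deriv_binomialTerm A (summable_binomialTerm A hz).hasSum hD,
    smul_smul, inv_mul_cancel₀ h1z, one_smul]
  exact hF.hasDerivAt

theorem exp_log_one_sub_smul_mul_tsum_binomialTerm (A : 𝔸) {z : ℂ} (hz : ‖z‖ < 1) :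
    NormedSpace.exp (log (1 - z) • A) * ∑' k, binomialTerm A k z = 1 := by
  have hconst : ∀ w ∈ Metric.ball (0 : ℂ) 1,
      HasDerivAt (fun w => NormedSpace.exp (log (1 - w) • A) * ∑' k, binomialTerm A k w)
        0 w := by
    intro w hw
    have hw' : ‖w‖ < 1 := mem_ball_zero_iff.mp hw
    have hcomm : Commute A (∑' k, binomialTerm A k w) :=
      .tsum_right A fun k => commute_binomialTerm A k w
    refine ((hasDerivAt_exp_log_one_sub_smul A hw').mul
      (hasDerivAt_tsum_binomialTerm A hw')).congr_deriv ?_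
    rw [mul_smul_comm, smul_mul_assoc, mul_assoc, hcomm.eq, ← mul_assoc, neg_smul, neg_add_cancel]
  have := Metric.isOpen_ball.is_const_of_deriv_eq_zero (convex_ball (0 : ℂ) 1).isPreconnected
    (fun w hw => (hconst w hw).differentiableAt.differentiableWithinAt)
    (fun w hw => (hconst w hw).deriv) (mem_ball_zero_iff.mpr hz) (Metric.mem_ball_self one_pos)
  simpa [tsum_binomialTerm_zero] using this

theorem hasSum_binomialTerm (A : 𝔸) {t : ℂ} (ht : ‖t‖ < 1) :
    HasSum (fun k => binomialTerm A k t) (NormedSpace.exp ((-log (1 - t)) • A)) := by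
  convert (summable_binomialTerm A ht).hasSum
  have hinv : NormedSpace.exp ((-log (1 - t)) • A) * NormedSpace.exp (log (1 - t) • A) = 1 := by
    have hc : Commute ((-log (1 - t)) • A) (log (1 - t) • A) :=
      ((Commute.refl A).smul_left _).smul_right _
    have hball : ∀ x : 𝔸, x ∈ Metric.eball 0 (NormedSpace.expSeries ℂ 𝔸).radius := by
      simp [NormedSpace.expSeries_radius_eq_top]
    rw [← NormedSpace.exp_add_of_commute_of_mem_ball hc (hball _) (hball _), ← add_smul,
      neg_add_cancel, zero_smul, NormedSpace.exp_zero]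
  rw [← mul_one (NormedSpace.exp _), ← exp_log_one_sub_smul_mul_tsum_binomialTerm A ht,
    ← mul_assoc, hinv, one_mul]

end BanachAlgebra

theorem poch_eq_aeval_ascPochhammer {r : ℕ} (A : Matrix (Fin r) (Fin r) ℂ) (k : ℕ) :
    poch A k = aeval A (ascPochhammer ℂ k) := by
  induction k with
  | zero => simp [poch]
  | succ k ih =>
    rw [poch, ih, ascPochhammer_succ_right, map_mul, map_add, aeval_X, map_natCast,
      Nat.cast_smul_eq_nsmul, nsmul_one]

/-- Matrix binomial theorem: for |t| < 1,
∑_{k≥0} (A)_k t^k / k! = (1-t)^{-A} = exp(-log(1-t) · A). -/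
theorem stmt_3 {r : ℕ} (A : Matrix (Fin r) (Fin r) ℂ) (t : ℂ) (ht : ‖t‖ < 1) :
    HasSum (fun k : ℕ => ((k.factorial : ℂ)⁻¹ * t ^ k) • poch A k)
      (NormedSpace.exp ((-(Complex.log (1 - t))) • A)) := by
  rcases isEmpty_or_nonempty (Fin r) with _ | _
  · convert hasSum_zero <;> exact Subsingleton.elim _ _
  -- `Matrix.linfty_opNormOneClass` needs a nonempty index type: for `r = 0`, `‖1‖ = 0`.
  · let := Matrix.linftyOpNormedRing (n := Fin r) (α := ℂ)
    let := Matrix.linftyOpNormedAlgebra (n := Fin r) (R := ℂ) (α := ℂ)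
    let := Matrix.linfty_opNormOneClass (n := Fin r) (α := ℂ)
    simp only [poch_eq_aeval_ascPochhammer]
    exact hasSum_binomialTerm A ht
end

section
/- Let A, B ∈ ℂ^{r×r} and C ∈ ℂ^{r×r} with C + kI invertible for all integers k ≥ 0, and suppose A is invertible. Then for |x| < 1 the Gauss hypergeometric matrix function satisfies the contiguous relation: ₂F₁(A+I, B; C; x) = ₂F₁(A, B; C; x) + x · B · ₂F₁(A+I, B+I; C+I; x) · C^{-1}, provided AB = BA. -/
/-!
Termwise, `(A+I)_{n+1} - (A)_{n+1} = (n+1) (A+I)_n` and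
`(B)_{n+1} (C)_{n+1}⁻¹ = B (B+I)_n (C+I)_n⁻¹ C⁻¹`; as `B` commutes with `(A+I)_n`, the `(n+1)`-st
term of `₂F₁(A+I,B;C;x) - ₂F₁(A,B;C;x)` is `x B` times the `n`-th term of `₂F₁(A+I,B+I;C+I;x)`
times `C⁻¹`, and the relation follows by shifting the summation index. The series converge for
`|x| < 1` by the ratio test applied to the scalar majorant
`∏_{k<n} |x| (‖A‖+k) (‖B‖+k) ‖(C+kI)⁻¹‖ / (k+1)`, whose ratio tends to `|x|` because
`k (C+kI)⁻¹ = (I + C/k)⁻¹ → I`.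
-/

open Matrix Complex Finset

/-- Gauss hypergeometric matrix function. -/
noncomputable def F21 {r : ℕ} (A B C : Matrix (Fin r) (Fin r) ℂ) (x : ℂ) :
    Matrix (Fin r) (Fin r) ℂ :=
  ∑' n : ℕ, ((n.factorial : ℂ)⁻¹ * x ^ n) • (poch A n * poch B n * (poch C n)⁻¹)

open Filter Topology

variable {r : ℕ}

lemma poch_succ_eq_mul_poch_add_one (A : Matrix (Fin r) (Fin r) ℂ) (n : ℕ) :
    poch A (n + 1) = A * poch (A + 1) n := by
  induction n with
  | zero => simp [poch]
  | succ n ih =>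
    rw [poch, ih, poch, mul_assoc, Nat.cast_succ, add_smul, one_smul, add_assoc, add_comm 1]

lemma Commute.poch_right {X A : Matrix (Fin r) (Fin r) ℂ} (h : Commute X A) (n : ℕ) :
    Commute X (poch A n) := by
  induction n with
  | zero => exact Commute.one_right X
  | succ n ih => exact ih.mul_right (h.add_right ((Commute.one_right X).smul_right _))

lemma poch_add_one_succ (A : Matrix (Fin r) (Fin r) ℂ) (n : ℕ) :
    poch (A + 1) (n + 1) = poch A (n + 1) + ((n : ℂ) + 1) • poch (A + 1) n := by
  have hA : Commute A (poch (A + 1) n) :=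
    ((Commute.refl A).add_right (Commute.one_right A)).poch_right n
  have hshift : A + 1 + (n : ℂ) • 1 = A + ((n : ℂ) + 1) • 1 := by
    rw [add_smul, one_smul, add_assoc, add_comm 1]
  rw [poch, poch_succ_eq_mul_poch_add_one, hshift, mul_add, hA.eq, mul_smul_comm, mul_one]

noncomputable def hypergeomTerm (A B C : Matrix (Fin r) (Fin r) ℂ) (x : ℂ) (n : ℕ) :
    Matrix (Fin r) (Fin r) ℂ :=
  ((n.factorial : ℂ)⁻¹ * x ^ n) • (poch A n * poch B n * (poch C n)⁻¹)

lemma F21_eq_tsum_hypergeomTerm (A B C : Matrix (Fin r) (Fin r) ℂ) (x : ℂ) :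
    F21 A B C x = ∑' n, hypergeomTerm A B C x n := rfl

lemma hypergeomTerm_zero (A B C : Matrix (Fin r) (Fin r) ℂ) (x : ℂ) :
    hypergeomTerm A B C x 0 = 1 := by
  simp [hypergeomTerm, poch]

lemma hypergeomTerm_add_one_succ_sub {A B : Matrix (Fin r) (Fin r) ℂ} (hAB : Commute A B)
    (C : Matrix (Fin r) (Fin r) ℂ) (x : ℂ) (n : ℕ) :
    hypergeomTerm (A + 1) B C x (n + 1) - hypergeomTerm A B C x (n + 1) =
      x • (B * hypergeomTerm (A + 1) (B + 1) (C + 1) x n * C⁻¹) := by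
  have hB : Commute (poch (A + 1) n) B :=
    (hAB.symm.add_right (Commute.one_right B)).poch_right n |>.symm
  have hcoef : ((n + 1).factorial : ℂ)⁻¹ * x ^ (n + 1) * ((n : ℂ) + 1) =
      x * ((n.factorial : ℂ)⁻¹ * x ^ n) := by
    have : ((n : ℂ) + 1) ≠ 0 := Nat.cast_add_one_ne_zero n
    rw [Nat.factorial_succ, Nat.cast_mul, Nat.cast_succ]
    field_simp
    ring
  simp only [hypergeomTerm]
  rw [← smul_sub, ← sub_mul, ← sub_mul, poch_add_one_succ, add_sub_cancel_left,
    poch_succ_eq_mul_poch_add_one B, poch_succ_eq_mul_poch_add_one C, Matrix.mul_inv_rev,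
    smul_mul_assoc, smul_mul_assoc, smul_smul, hcoef, ← smul_smul, mul_smul_comm, smul_mul_assoc,
    ← mul_assoc (poch (A + 1) n), hB.eq]
  simp only [mul_assoc]

lemma summable_prod_range_of_tendsto {q : ℕ → ℝ} {l : ℝ} (hq : Tendsto q atTop (𝓝 l))
    (hl : |l| < 1) : Summable fun n ↦ ∏ k ∈ range n, q k := by
  obtain ⟨ρ, hlρ, hρ⟩ := exists_between hl
  refine summable_of_ratio_norm_eventually_le hρ ?_
  filter_upwards [(continuous_abs.tendsto l).comp hq |>.eventually (gt_mem_nhds hlρ)] with n hn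
  rw [prod_range_succ, norm_mul, mul_comm, Real.norm_eq_abs (q n)]
  exact mul_le_mul_of_nonneg_right hn.le (norm_nonneg _)

section LinftyOpNorm

-- Any submultiplicative norm with `‖1‖ = 1` would do.
attribute [local instance] Matrix.linftyOpNormedRing Matrix.linftyOpNormedAlgebra

lemma norm_poch_le [Nonempty (Fin r)] (A : Matrix (Fin r) (Fin r) ℂ) (n : ℕ) :
    ‖poch A n‖ ≤ ∏ k ∈ range n, (‖A‖ + k) := by
  induction n with
  | zero => simp [poch]
  | succ n ih =>
    rw [poch, prod_range_succ]
    refine (norm_mul_le _ _).trans (mul_le_mul ih ((norm_add_le _ _).trans ?_) (norm_nonneg _)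
      (prod_nonneg fun k _ ↦ by positivity))
    rw [norm_smul, norm_one, mul_one, Complex.norm_natCast]

lemma norm_inv_poch_le [Nonempty (Fin r)] (C : Matrix (Fin r) (Fin r) ℂ) (n : ℕ) :
    ‖(poch C n)⁻¹‖ ≤ ∏ k ∈ range n, ‖(C + (k : ℂ) • 1)⁻¹‖ := by
  induction n with
  | zero => simp [poch]
  | succ n ih =>
    rw [poch, Matrix.mul_inv_rev, prod_range_succ, mul_comm (∏ k ∈ range n, _)]
    exact (norm_mul_le _ _).trans (mul_le_mul_of_nonneg_left ih (norm_nonneg _))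

lemma norm_hypergeomTerm_le [Nonempty (Fin r)] (A B C : Matrix (Fin r) (Fin r) ℂ) (x : ℂ)
    (n : ℕ) : ‖hypergeomTerm A B C x n‖ ≤
      ∏ k ∈ range n, ‖x‖ / (k + 1) * ((‖A‖ + k) * (‖B‖ + k) * ‖(C + (k : ℂ) • 1)⁻¹‖) := by
  have hcoef : ‖(n.factorial : ℂ)⁻¹ * x ^ n‖ = ∏ k ∈ range n, ‖x‖ / (k + 1) := by
    have hfac : ∏ k ∈ range n, ((k : ℝ) + 1) = n.factorial := by
      exact_mod_cast prod_range_add_one_eq_factorial n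
    rw [prod_div_distrib, prod_const, card_range, hfac, norm_mul, norm_inv, Complex.norm_natCast,
      norm_pow, inv_mul_eq_div]
  rw [hypergeomTerm, norm_smul, hcoef, prod_mul_distrib, prod_mul_distrib, prod_mul_distrib]
  gcongr
  calc ‖poch A n * poch B n * (poch C n)⁻¹‖
      ≤ ‖poch A n‖ * ‖poch B n‖ * ‖(poch C n)⁻¹‖ := norm_mul₃_le
    _ ≤ _ := by
      have hA := prod_nonneg fun k (_ : k ∈ range n) ↦ (by positivity : 0 ≤ ‖A‖ + k)
      exact mul_le_mul (mul_le_mul (norm_poch_le A n) (norm_poch_le B n) (norm_nonneg _) hA)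
        (norm_inv_poch_le C n) (norm_nonneg _) (by positivity)

lemma tendsto_natCast_mul_norm_inv_add_smul_one [Nonempty (Fin r)]
    (C : Matrix (Fin r) (Fin r) ℂ) :
    Tendsto (fun k : ℕ ↦ k * ‖(C + (k : ℂ) • 1)⁻¹‖) atTop (𝓝 1) := by
  set u : ℕ → Matrix (Fin r) (Fin r) ℂ := fun k ↦ (k : ℂ)⁻¹ • C + 1
  have hu : Tendsto u atTop (𝓝 1) := by
    simpa using ((tendsto_inv_atTop_nhds_zero_nat (𝕜 := ℂ)).smul_const C).add_const 1
  have hinv : Tendsto (fun k ↦ Ring.inverse (u k)) atTop (𝓝 1) := by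
    have := (NormedRing.inverse_continuousAt (1 : (Matrix (Fin r) (Fin r) ℂ)ˣ)).tendsto.comp hu
    rwa [Units.val_one, Ring.inverse_one] at this
  refine (by simpa using hinv.norm : Tendsto (fun k ↦ ‖Ring.inverse (u k)‖) atTop (𝓝 1)).congr' ?_
  filter_upwards [hu.eventually (Units.isOpen.mem_nhds isUnit_one), eventually_ne_atTop 0]
    with k hunit hk
  have hk' : (k : ℂ) ≠ 0 := Nat.cast_ne_zero.mpr hk
  have hsmul : (k : ℂ)⁻¹ • (C + (k : ℂ) • 1) = u k := by
    rw [smul_add, smul_smul, inv_mul_cancel₀ hk', one_smul]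
  have hCk : (C + (k : ℂ) • 1)⁻¹ = (k : ℂ)⁻¹ • Ring.inverse (u k) := by
    refine Matrix.inv_eq_left_inv ?_
    rw [smul_mul_assoc, ← mul_smul_comm, hsmul, Ring.inverse_mul_cancel _ hunit]
  rw [hCk, norm_smul, norm_inv, Complex.norm_natCast, ← mul_assoc,
    mul_inv_cancel₀ (Nat.cast_ne_zero.mpr hk), one_mul]

lemma tendsto_hypergeomTerm_norm_ratio [Nonempty (Fin r)] (A B C : Matrix (Fin r) (Fin r) ℂ)
    (x : ℂ) : Tendsto (fun k : ℕ ↦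
      ‖x‖ / (k + 1) * ((‖A‖ + k) * (‖B‖ + k) * ‖(C + (k : ℂ) • 1)⁻¹‖)) atTop (𝓝 ‖x‖) := by
  have hshift (a : ℝ) : Tendsto (fun k : ℕ ↦ 1 + a / k) atTop (𝓝 1) := by
    simpa using (tendsto_const_div_atTop_nhds_zero_nat a).const_add 1
  have hlim := (((tendsto_const_nhds (x := ‖x‖)).mul ((hshift ‖A‖).mul (hshift ‖B‖))).mul
    (tendsto_natCast_div_add_atTop (1 : ℝ))).mul (tendsto_natCast_mul_norm_inv_add_smul_one C)
  simp only [mul_one] at hlim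
  refine hlim.congr' ?_
  filter_upwards [eventually_ne_atTop 0] with k hk
  field_simp
  ring

lemma summable_hypergeomTerm (A B C : Matrix (Fin r) (Fin r) ℂ) {x : ℂ} (hx : ‖x‖ < 1) :
    Summable (hypergeomTerm A B C x) := by
  rcases isEmpty_or_nonempty (Fin r) with hr | hr
  · exact summable_zero.congr fun _ ↦ Subsingleton.elim _ _
  · exact .of_norm_bounded (summable_prod_range_of_tendsto
      (tendsto_hypergeomTerm_norm_ratio A B C x) (by rwa [abs_norm]))
      (norm_hypergeomTerm_le A B C x)

end LinftyOpNorm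

theorem stmt_4_general {r : ℕ} (A B C : Matrix (Fin r) (Fin r) ℂ) (hAB : A * B = B * A)
    (x : ℂ) (hx : ‖x‖ < 1) :
    F21 (A + 1) B C x =
      F21 A B C x + x • (B * F21 (A + 1) (B + 1) (C + 1) x * C⁻¹) := by
  have h₁ := summable_hypergeomTerm (A + 1) B C hx
  have h₀ := summable_hypergeomTerm A B C hx
  have h₂ := summable_hypergeomTerm (A + 1) (B + 1) (C + 1) hx
  refine eq_add_of_sub_eq' ?_
  simp only [F21_eq_tsum_hypergeomTerm]
  rw [← h₁.tsum_sub h₀, (h₁.sub h₀).tsum_eq_zero_add]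
  simp only [hypergeomTerm_zero, sub_self, zero_add, hypergeomTerm_add_one_succ_sub hAB]
  rw [((h₂.mul_left B).mul_right C⁻¹).tsum_const_smul x, (h₂.mul_left B).tsum_mul_right,
    h₂.tsum_mul_left]

/-- Contiguous relation for the Gauss hypergeometric matrix function. -/
theorem stmt_4 {r : ℕ} (A B C : Matrix (Fin r) (Fin r) ℂ)
    (hC : ∀ k : ℕ, IsUnit (C + (k : ℂ) • 1)) (hA : IsUnit A) (hAB : A * B = B * A)
    (x : ℂ) (hx : ‖x‖ < 1) :
    F21 (A + 1) B C x =
      F21 A B C x + x • (B * F21 (A + 1) (B + 1) (C + 1) x * C⁻¹) :=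
  stmt_4_general A B C hAB x hx
end
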